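/- Let C be a set of vectors in ℝ^9 such that every x ∈ C has |x|² = 2, every two distinct x, y ∈ C satisfy ⟨x, y⟩ ≤ 1, and C contains the set {(x, 0) : x ∈ E_8 roots}, i.e. the E_8 root system placed in the hyperplane of vectors with last coordinate 0. Then C has at most 272 elements. -/

import Mathlib

/-
A point of `C` outside the copy of `E₈` has the form `(u, h)` with `⟪u, r⟫ ≤ 1` for every root `r`:
`u` lies in the Voronoi cell of the `E₈` lattice, whose covering radius is `1`, so `‖u‖² ≤ 1` and
`h² ≥ 1`. Two such points `(u, h) ≠ (u', h')` with `h, h' ≥ 1` satisfy `⟪u, u'⟫ ≤ 1 - h h' ≤ 0`, and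
by Rankin's bound at most `2 · 8 = 16` nonzero vectors of `ℝ⁸` have pairwise nonpositive inner
products. Hence `|C| ≤ 240 + 16 + 16`.
-/

open scoped RealInnerProductSpace

/-- The `Dₙ` root system: all vectors `±eᵢ ± eⱼ` with `i < j`. -/
def DRootSystem (n : ℕ) : Set (EuclideanSpace ℝ (Fin n)) :=
  { v | ∃ i j : Fin n, i < j ∧ ∃ s t : ℝ, (s = 1 ∨ s = -1) ∧ (t = 1 ∨ t = -1) ∧
      v = s • EuclideanSpace.single i (1 : ℝ) + t • EuclideanSpace.single j (1 : ℝ) }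

/-- The `E₈` root system: the vectors `±eᵢ ± eⱼ` (`i < j`) together with the vectors
all of whose coordinates are `±1/2`, with an even number of minus signs. -/
def E8RootSystem : Set (EuclideanSpace ℝ (Fin 8)) :=
  DRootSystem 8 ∪
    { v | (∀ i, v i = 1 / 2 ∨ v i = -(1 / 2)) ∧ Even {i : Fin 8 | v i = -(1 / 2)}.ncard }

/-- The `E₈` root system placed in the hyperplane of `ℝ⁹` of vectors whose last
coordinate is `0`. -/
def E8EmbeddedIn9 : Set (EuclideanSpace ℝ (Fin 9)) :=
  { v | v 8 = 0 ∧ (show EuclideanSpace ℝ (Fin 8) from WithLp.toLp 2 (fun i : Fin 8 => v i.castSucc)) ∈ E8RootSystem }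

open Module Finset

theorem Set.finite_and_ncard_le_of_forall_finset {α : Type*} {s : Set α} {n : ℕ}
    (h : ∀ t : Finset α, ↑t ⊆ s → t.card ≤ n) : s.Finite ∧ s.ncard ≤ n := by
  have hfin : s.Finite := by
    by_contra hinf
    obtain ⟨t, hts, ht⟩ := Set.Infinite.exists_subset_card_eq hinf (n + 1)
    have := h t hts
    omega
  exact ⟨hfin, by simpa [Set.ncard_eq_toFinset_card _ hfin] using h hfin.toFinset (by simp)⟩

theorem Set.finite_and_ncard_le_of_subset_image {α β : Type*} {s : Set β} (t : Finset α)
    (f : α → β) (h : s ⊆ f '' t) : s.Finite ∧ s.ncard ≤ t.card := by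
  have hfin : (f '' t).Finite := t.finite_toSet.image f
  exact ⟨hfin.subset h, (Set.ncard_le_ncard h hfin).trans
    ((Set.ncard_image_le t.finite_toSet).trans (Set.ncard_coe_finset t).le)⟩

section InnerProductSpace

variable {E : Type*} [NormedAddCommGroup E] [InnerProductSpace ℝ E]

/-- If `∑ fₓ • x = 0`, the positive and negative parts of `f` give the same vector `z`, and
`‖z‖² ≤ 0`; applying `φ` then kills both parts. -/
theorem linearIndepOn_of_pairwise_inner_nonpos (φ : Dual ℝ E) {s : Finset E}
    (hφ : ∀ x ∈ s, 0 < φ x) (hs : (s : Set E).Pairwise fun x y => ⟪x, y⟫ ≤ 0) :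
    LinearIndepOn ℝ id (s : Set E) := by
  rw [linearIndepOn_finset_iff]
  intro f hf
  set z := ∑ x ∈ s, (f x)⁺ • x
  have hz : z = ∑ x ∈ s, (f x)⁻ • x := by
    rw [← sub_eq_zero, ← sum_sub_distrib, ← hf]
    refine sum_congr rfl fun x _ => ?_
    rw [← sub_smul, posPart_sub_negPart, id]
  have hzz : ⟪z, z⟫ ≤ 0 := by
    conv_lhs => arg 2; rw [hz]
    simp only [z, sum_inner, inner_sum, real_inner_smul_left, real_inner_smul_right]
    refine sum_nonpos fun x hx => sum_nonpos fun y hy => ?_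
    obtain rfl | hxy := eq_or_ne x y
    · rcases le_total 0 (f x) with h | h <;> simp [h]
    · exact mul_nonpos_of_nonneg_of_nonpos (by positivity) (mul_nonpos_of_nonneg_of_nonpos
        (by positivity) (hs hy hx hxy.symm))
  have hz0 : z = 0 := by
    simpa using le_antisymm hzz real_inner_self_nonneg
  have hvanish : ∀ g : E → ℝ, (∀ x, 0 ≤ g x) → ∑ x ∈ s, g x • x = 0 → ∀ x ∈ s, g x = 0 := by
    intro g hg hsum x hx
    have : ∑ y ∈ s, g y * φ y = 0 := by simpa using congrArg φ hsum
    rw [sum_eq_zero_iff_of_nonneg fun y hy => mul_nonneg (hg y) (hφ y hy).le] at this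
    exact (mul_eq_zero.mp (this x hx)).resolve_right (hφ x hx).ne'
  intro x hx
  rw [← posPart_sub_negPart (f x), hvanish _ (fun y => posPart_nonneg _) hz0 x hx,
    hvanish _ (fun y => negPart_nonneg _) (hz ▸ hz0) x hx, sub_zero]

/-- Rankin's bound. A functional nonvanishing on `s` splits it into two linearly independent
halves. -/
theorem card_le_two_mul_finrank_span_of_pairwise_inner_nonpos {s : Finset E} (h0 : (0 : E) ∉ s)
    (hs : (s : Set E).Pairwise fun x y => ⟪x, y⟫ ≤ 0) :
    s.card ≤ 2 * finrank ℝ (Submodule.span ℝ (s : Set E)) := by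
  have card_le (ψ : Dual ℝ E) (t : Finset E) (hts : t ⊆ s) (hψ : ∀ x ∈ t, 0 < ψ x) :
      t.card ≤ finrank ℝ (Submodule.span ℝ (s : Set E)) := by
    rw [← finrank_span_finset_eq_card
      (linearIndepOn_of_pairwise_inner_nonpos ψ hψ (hs.mono (coe_subset.mpr hts)))]
    exact Submodule.finrank_mono (Submodule.span_mono (coe_subset.mpr hts))
  obtain ⟨φ, hφ⟩ := Module.exists_dual_forall_apply_ne_zero (K := ℝ) (fun x : s => (x : E))
    fun x => ne_of_mem_of_not_mem x.2 h0
  rw [← card_filter_add_card_filter_not (fun x => 0 < φ x), two_mul]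
  refine add_le_add (card_le φ _ (filter_subset _ _) fun x hx => (mem_filter.mp hx).2)
    (card_le (-φ) _ (filter_subset _ _) fun x hx => ?_)
  obtain ⟨hxs, hx⟩ := mem_filter.mp hx
  simpa using lt_of_le_of_ne (not_lt.mp hx) (hφ ⟨x, hxs⟩)

theorem finrank_orthogonal_span_singleton_add_one [FiniteDimensional ℝ E] {e : E} (he : e ≠ 0) :
    finrank ℝ (ℝ ∙ e)ᗮ + 1 = finrank ℝ E := by
  rw [← finrank_span_singleton (K := ℝ) he, add_comm, Submodule.finrank_add_finrank_orthogonal]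

theorem inner_eq_inner_sub_add_mul {e : E} (he : ‖e‖ = 1) (x y : E) :
    ⟪x, y⟫ = ⟪x - ⟪e, x⟫ • e, y - ⟪e, y⟫ • e⟫ + ⟪e, x⟫ * ⟪e, y⟫ := by
  simp only [inner_sub_left, inner_sub_right, real_inner_smul_left, real_inner_smul_right,
    real_inner_self_eq_norm_sq, he, real_inner_comm x e, real_inner_comm y e]
  ring

theorem norm_sub_inner_smul_sq_add_sq {e : E} (he : ‖e‖ = 1) (x : E) :
    ‖x - ⟪e, x⟫ • e‖ ^ 2 + ⟪e, x⟫ ^ 2 = ‖x‖ ^ 2 := by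
  rw [← real_inner_self_eq_norm_sq, sq ⟪e, x⟫, ← inner_eq_inner_sub_add_mul he,
    real_inner_self_eq_norm_sq]

variable {C : Set E} {e : E}

theorem inner_sub_inner_smul_le_of_mem_cap (hip : C.Pairwise fun x y => ⟪x, y⟫ ≤ 1)
    (he : ‖e‖ = 1) {x y : E} (hx : x ∈ C) (hy : y ∈ C) (hxy : x ≠ y) :
    ⟪x - ⟪e, x⟫ • e, y - ⟪e, y⟫ • e⟫ ≤ 1 - ⟪e, x⟫ * ⟪e, y⟫ := by
  have : ⟪x, y⟫ ≤ 1 := hip hx hy hxy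
  rw [inner_eq_inner_sub_add_mul he] at this
  linarith

/-- A point of the cap at height `√2` leaves no room for a second one. -/
theorem eq_of_mem_cap_of_sub_inner_smul_eq_zero (hnorm : ∀ x ∈ C, ‖x‖ ^ 2 = 2)
    (hip : C.Pairwise fun x y => ⟪x, y⟫ ≤ 1) (he : ‖e‖ = 1) {x y : E}
    (hx : x ∈ {x ∈ C | 1 ≤ ⟪e, x⟫}) (hy : y ∈ {x ∈ C | 1 ≤ ⟪e, x⟫})
    (hx0 : x - ⟪e, x⟫ • e = 0) : y = x := by
  by_contra hyx
  have h1 := inner_sub_inner_smul_le_of_mem_cap hip he hx.1 hy.1 (Ne.symm hyx)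
  have h2 := norm_sub_inner_smul_sq_add_sq he x
  rw [hx0, inner_zero_left] at h1
  rw [hx0, norm_zero, hnorm x hx.1] at h2
  nlinarith [hx.2, hy.2]

theorem card_le_of_subset_cap [FiniteDimensional ℝ E] (hnorm : ∀ x ∈ C, ‖x‖ ^ 2 = 2)
    (hip : C.Pairwise fun x y => ⟪x, y⟫ ≤ 1) (he : ‖e‖ = 1) {t : Finset E}
    (ht : ↑t ⊆ {x ∈ C | 1 ≤ ⟪e, x⟫}) (h0 : ∀ x ∈ t, x - ⟪e, x⟫ • e ≠ 0) :
    t.card ≤ 2 * finrank ℝ (ℝ ∙ e)ᗮ := by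
  classical
  set P : E → E := fun x => x - ⟪e, x⟫ • e
  have hcap : ∀ x ∈ t, x ∈ C ∧ 1 ≤ ⟪e, x⟫ := fun x hx => ht hx
  have hinj : Set.InjOn P t := fun x hx y hy hxy => by
    replace hxy : x - ⟪e, x⟫ • e = y - ⟪e, y⟫ • e := hxy
    have hsq := norm_sub_inner_smul_sq_add_sq he x
    rw [hxy, hnorm x (hcap x hx).1,
      ← hnorm y (hcap y hy).1, ← norm_sub_inner_smul_sq_add_sq he y] at hsq
    have hc : ⟪e, x⟫ = ⟪e, y⟫ :=
      (sq_eq_sq₀ (by linarith [(hcap x hx).2]) (by linarith [(hcap y hy).2])).mp (by linarith)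
    rw [← sub_add_cancel x (⟪e, x⟫ • e), ← sub_add_cancel y (⟪e, y⟫ • e)]
    exact congrArg₂ (· + ·) hxy (by rw [hc])
  have hspan : Submodule.span ℝ (t.image P : Set E) ≤ (ℝ ∙ e)ᗮ := by
    rw [Submodule.span_le]
    rintro _ hz
    obtain ⟨x, -, rfl⟩ := mem_image.mp hz
    rw [SetLike.mem_coe, Submodule.mem_orthogonal_singleton_iff_inner_right]
    simp only [P, inner_sub_right, real_inner_smul_right, real_inner_self_eq_norm_sq, he]
    ring
  rw [← card_image_of_injOn hinj]
  refine (card_le_two_mul_finrank_span_of_pairwise_inner_nonpos (by simpa using h0) ?_).trans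
    (by gcongr; exact Submodule.finrank_mono hspan)
  rintro _ hu _ hv huv
  obtain ⟨x, hx, rfl⟩ := mem_image.mp hu
  obtain ⟨y, hy, rfl⟩ := mem_image.mp hv
  have := inner_sub_inner_smul_le_of_mem_cap hip he (hcap x hx).1 (hcap y hy).1
    fun h => huv (h ▸ rfl)
  nlinarith [(hcap x hx).2, (hcap y hy).2]

theorem cap_finite_and_ncard_le [FiniteDimensional ℝ E] (hE : 2 ≤ finrank ℝ E)
    (hnorm : ∀ x ∈ C, ‖x‖ ^ 2 = 2) (hip : C.Pairwise fun x y => ⟪x, y⟫ ≤ 1) (he : ‖e‖ = 1) :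
    {x ∈ C | 1 ≤ ⟪e, x⟫}.Finite ∧ {x ∈ C | 1 ≤ ⟪e, x⟫}.ncard ≤ 2 * (finrank ℝ E - 1) := by
  have hrank := finrank_orthogonal_span_singleton_add_one (norm_ne_zero_iff.mp (he ▸ one_ne_zero))
  refine Set.finite_and_ncard_le_of_forall_finset fun t ht => ?_
  by_cases hzero : ∃ x ∈ t, x - ⟪e, x⟫ • e = 0
  · obtain ⟨x, hx, hx0⟩ := hzero
    have : t.card ≤ 1 := card_le_one.mpr fun y hy z hz =>
      (eq_of_mem_cap_of_sub_inner_smul_eq_zero hnorm hip he (ht hx) (ht hy) hx0).trans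
        (eq_of_mem_cap_of_sub_inner_smul_eq_zero hnorm hip he (ht hx) (ht hz) hx0).symm
    omega
  · push Not at hzero
    have := card_le_of_subset_cap hnorm hip he ht hzero
    omega

end InnerProductSpace

theorem DRootSystem_finite_and_ncard_le (n : ℕ) :
    (DRootSystem n).Finite ∧ (DRootSystem n).ncard ≤ n.choose 2 * 4 := by
  have hcard : #(({p : Fin n × Fin n | p.1 < p.2} : Finset _) ×ˢ
      (({1, -1} : Finset ℝ) ×ˢ ({1, -1} : Finset ℝ))) = n.choose 2 * 4 := by
    rw [card_product, card_product, Fintype.card_product_filter_lt, Fintype.card_fin,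
      card_pair (by norm_num : (1 : ℝ) ≠ -1)]
  refine hcard ▸ Set.finite_and_ncard_le_of_subset_image _
    (fun q : (Fin n × Fin n) × ℝ × ℝ =>
      q.2.1 • EuclideanSpace.single q.1.1 (1 : ℝ) + q.2.2 • EuclideanSpace.single q.1.2 1) ?_
  rintro _ ⟨i, j, hij, s, t, hs, ht, rfl⟩
  exact ⟨((i, j), s, t), by simp [hij, hs, ht], rfl⟩

theorem E8RootSystem_finite_and_ncard_le : E8RootSystem.Finite ∧ E8RootSystem.ncard ≤ 240 := by
  obtain ⟨hDfin, hDcard⟩ := DRootSystem_finite_and_ncard_le 8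
  obtain ⟨hHfin, hHcard⟩ := Set.finite_and_ncard_le_of_subset_image
    (s := { v : EuclideanSpace ℝ (Fin 8) |
      (∀ i, v i = 1 / 2 ∨ v i = -(1 / 2)) ∧ Even {i : Fin 8 | v i = -(1 / 2)}.ncard })
    {T : Finset (Fin 8) | Even #T}
    (fun T => WithLp.toLp 2 fun i => if i ∈ T then -(1 / 2) else 1 / 2) <| by
      rintro v ⟨hhalf, heven⟩
      have hneg : {i : Fin 8 | v i = -(1 / 2)} = ↑({i | v i = -(1 / 2)} : Finset (Fin 8)) := by
        simp
      rw [hneg, Set.ncard_coe_finset] at heven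
      refine ⟨_, mem_filter.mpr ⟨mem_univ _, heven⟩, ?_⟩
      ext i
      rcases hhalf i with h | h <;> norm_num [h]
  have hH : #({T : Finset (Fin 8) | Even #T}) = 128 := by rfl
  refine ⟨hDfin.union hHfin, (Set.ncard_union_le _ _).trans ?_⟩
  have : Nat.choose 8 2 * 4 = 112 := by decide
  omega

namespace EuclideanSpace

variable {n : ℕ}

def dropLast (x : EuclideanSpace ℝ (Fin (n + 1))) : EuclideanSpace ℝ (Fin n) :=
  WithLp.toLp 2 (Fin.init x.ofLp)

def snocZero (r : EuclideanSpace ℝ (Fin n)) : EuclideanSpace ℝ (Fin (n + 1)) :=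
  WithLp.toLp 2 (Fin.snoc r.ofLp 0)

@[simp] theorem dropLast_apply (x : EuclideanSpace ℝ (Fin (n + 1))) (i : Fin n) :
    dropLast x i = x i.castSucc := rfl

@[simp] theorem dropLast_snocZero (r : EuclideanSpace ℝ (Fin n)) : dropLast (snocZero r) = r := by
  ext i
  simp [dropLast, snocZero]

@[simp] theorem snocZero_last (r : EuclideanSpace ℝ (Fin n)) : snocZero r (Fin.last n) = 0 := by
  simp [snocZero]

theorem snocZero_dropLast {x : EuclideanSpace ℝ (Fin (n + 1))} (hx : x (Fin.last n) = 0) :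
    snocZero (dropLast x) = x := by
  ext i
  refine Fin.lastCases ?_ (fun j => ?_) i
  · simp [hx]
  · simp [snocZero, dropLast, Fin.init]

theorem inner_eq_inner_dropLast_add (x y : EuclideanSpace ℝ (Fin (n + 1))) :
    ⟪x, y⟫ = ⟪dropLast x, dropLast y⟫ + x (Fin.last n) * y (Fin.last n) := by
  simp only [PiLp.inner_apply, Fin.sum_univ_castSucc, dropLast_apply, RCLike.inner_apply,
    conj_trivial]
  ring

theorem norm_sq_eq_norm_dropLast_sq_add (x : EuclideanSpace ℝ (Fin (n + 1))) :
    ‖x‖ ^ 2 = ‖dropLast x‖ ^ 2 + x (Fin.last n) ^ 2 := by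
  rw [← real_inner_self_eq_norm_sq, ← real_inner_self_eq_norm_sq, inner_eq_inner_dropLast_add, sq]

end EuclideanSpace

open EuclideanSpace

theorem E8EmbeddedIn9_eq_image : E8EmbeddedIn9 = snocZero '' E8RootSystem := by
  ext x
  constructor
  · rintro ⟨hx, hxE⟩
    exact ⟨dropLast x, hxE, snocZero_dropLast hx⟩
  · rintro ⟨r, hr, rfl⟩
    exact ⟨snocZero_last r, show dropLast (snocZero r) ∈ E8RootSystem by rwa [dropLast_snocZero]⟩

theorem E8EmbeddedIn9_finite_and_ncard_le :
    E8EmbeddedIn9.Finite ∧ E8EmbeddedIn9.ncard ≤ 240 := by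
  obtain ⟨hfin, hcard⟩ := E8RootSystem_finite_and_ncard_le
  rw [E8EmbeddedIn9_eq_image]
  exact ⟨hfin.image _, (Set.ncard_image_le hfin).trans hcard⟩

theorem sum_sq_le_one_of_E8_constraints (a : Fin 8 → ℝ) (h0 : ∀ i, 0 ≤ a i)
    (hpair : ∀ i j, i ≠ j → a i + a j ≤ 1) (hsum : ∀ k, ∑ i, a i - 2 * a k ≤ 2) :
    ∑ i, a i ^ 2 ≤ 1 := by
  -- On `[b, c]`, `x² ≤ (b + c) x - b c`. With `a p` the largest and `a q` the smallest entry, use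
  -- `[a q, a p]` if `a p ≤ 1/2`, and otherwise `[a q, 1 - a p]` for the entries other than `a p`.
  obtain ⟨p, -, hp⟩ := exists_max_image univ a univ_nonempty
  obtain ⟨q, -, hq⟩ := exists_min_image univ a univ_nonempty
  have hS := hsum q
  have hq0 := h0 q
  rcases le_total (a p) (1 / 2) with hm | hm
  · have hbound : ∑ i, a i ^ 2 ≤ ∑ i, ((a p + a q) * a i - a p * a q) :=
      sum_le_sum fun i _ => by nlinarith [hp i (mem_univ _), hq i (mem_univ _)]
    rw [sum_sub_distrib, ← mul_sum, sum_const, card_univ, Fintype.card_fin, nsmul_eq_mul,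
      Nat.cast_ofNat] at hbound
    have hqp := hq p (mem_univ _)
    nlinarith [mul_le_mul_of_nonneg_left hS (by linarith : 0 ≤ a p + a q),
      mul_nonneg (by linarith : 0 ≤ 1 - 2 * a p) (by linarith : 0 ≤ 1 - 2 * a q),
      mul_nonneg hq0 (by linarith : 0 ≤ a p - a q)]
  · have hbound : ∑ i ∈ univ.erase p, a i ^ 2 ≤
        ∑ i ∈ univ.erase p, ((1 - a p + a q) * a i - (1 - a p) * a q) :=
      sum_le_sum fun i hi => by
        nlinarith [hpair i p (ne_of_mem_erase hi), hq i (mem_univ _)]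
    have hrest : ∑ i ∈ univ.erase p, a i = ∑ i, a i - a p := sum_erase_eq_sub (mem_univ p)
    rw [sum_sub_distrib, ← mul_sum, sum_const, card_erase_of_mem (mem_univ p), card_univ,
      Fintype.card_fin, nsmul_eq_mul, hrest] at hbound
    simp only [Nat.reduceSub, Nat.cast_ofNat] at hbound
    rw [← add_sum_erase _ _ (mem_univ p)]
    obtain ⟨i, hi⟩ := exists_ne p
    have hq1 : a q ≤ 1 - a p := by linarith [hq i (mem_univ _), hpair i p hi]
    nlinarith [mul_le_mul_of_nonneg_left hS (by linarith : 0 ≤ 1 - a p + a q),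
      mul_nonneg (by linarith : 0 ≤ 1 - a p - a q) (by linarith : 0 ≤ 2 * a q + 2 * a p - 1)]

theorem exists_sign_mul_eq_abs (x : ℝ) : ∃ s : ℝ, (s = 1 ∨ s = -1) ∧ s * x = |x| := by
  rcases abs_cases x with ⟨h, -⟩ | ⟨h, -⟩
  · exact ⟨1, Or.inl rfl, by rw [h, one_mul]⟩
  · exact ⟨-1, Or.inr rfl, by rw [h, neg_one_mul]⟩

section E8Constraints

variable {u : EuclideanSpace ℝ (Fin 8)}

theorem abs_add_abs_le_one_of_forall_inner_E8Root_le_one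
    (hu : ∀ r ∈ E8RootSystem, ⟪u, r⟫ ≤ 1) {i j : Fin 8} (hij : i ≠ j) :
    |u i| + |u j| ≤ 1 := by
  wlog hlt : i < j generalizing i j
  · rw [add_comm]
    exact this hij.symm (hij.lt_or_gt.resolve_left hlt)
  obtain ⟨s, hs, hsu⟩ := exists_sign_mul_eq_abs (u i)
  obtain ⟨t, ht, htu⟩ := exists_sign_mul_eq_abs (u j)
  have := hu _ (Or.inl ⟨i, j, hlt, s, t, hs, ht, rfl⟩)
  rwa [inner_add_right, real_inner_smul_right, real_inner_smul_right,
    EuclideanSpace.inner_single_right, EuclideanSpace.inner_single_right, one_mul, one_mul,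
    conj_trivial, conj_trivial, hsu, htu] at this

theorem sum_abs_sub_two_mul_abs_le_two_of_forall_inner_E8Root_le_one
    (hu : ∀ r ∈ E8RootSystem, ⟪u, r⟫ ≤ 1) (k : Fin 8) : ∑ i, |u i| - 2 * |u k| ≤ 2 := by
  -- the signs of `u` away from `k`, with the sign at `k` chosen to make their number even
  set N : Finset (Fin 8) := {i | i ≠ k ∧ u i < 0}
  set T := if Even #N then N else insert k N
  have hT : Even #T := by
    unfold T
    split_ifs with h
    · exact h
    · rw [card_insert_of_notMem (by simp [N])]
      exact (Nat.not_even_iff_odd.mp h).add_one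
  have hmemT : ∀ i ≠ k, i ∈ T ↔ u i < 0 := fun i hi => by
    unfold T
    split_ifs <;> simp [N, hi]
  set v : EuclideanSpace ℝ (Fin 8) := WithLp.toLp 2 fun i => if i ∈ T then -(1 / 2) else 1 / 2
  have hv : v ∈ E8RootSystem := by
    refine Or.inr ⟨fun i => ?_, ?_⟩
    · by_cases hi : i ∈ T <;> simp [v, hi]
    · have : {i | v i = -(1 / 2)} = ↑T := by
        ext i
        by_cases hi : i ∈ T <;> norm_num [v, hi]
      rwa [this, Set.ncard_coe_finset]
  have hterm : ∀ i, |u i| / 2 - (if i = k then |u i| else 0) ≤ u i * v i := fun i => by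
    by_cases hik : i = k
    · subst hik
      by_cases hi : i ∈ T <;> simp only [v, hi, if_true, if_false] <;>
        linarith [neg_abs_le (u i), le_abs_self (u i)]
    · rw [if_neg hik, sub_zero]
      by_cases hneg : u i < 0
      · simp only [v, (hmemT i hik).mpr hneg, if_true, abs_of_neg hneg]
        linarith
      · simp only [v, mt (hmemT i hik).mp hneg, if_false,
          abs_of_nonneg (not_lt.mp hneg)]
        linarith
  have huv : ∑ i, u i * v i ≤ 1 := by simpa [PiLp.inner_apply, mul_comm] using hu v hv
  calc ∑ i, |u i| - 2 * |u k| = 2 * ∑ i, (|u i| / 2 - if i = k then |u i| else 0) := by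
        rw [sum_sub_distrib, sum_ite_eq', if_pos (mem_univ k), ← sum_div]
        ring
    _ ≤ 2 * ∑ i, u i * v i := by gcongr with i; exact hterm i
    _ ≤ 2 := by linarith [huv]

end E8Constraints

/-- The covering radius of the `E₈` lattice is `1`. -/
theorem norm_sq_le_one_of_forall_inner_E8Root_le_one {u : EuclideanSpace ℝ (Fin 8)}
    (hu : ∀ r ∈ E8RootSystem, ⟪u, r⟫ ≤ 1) : ‖u‖ ^ 2 ≤ 1 := by
  rw [EuclideanSpace.norm_sq_eq]
  simpa [sq_abs] using sum_sq_le_one_of_E8_constraints (fun i => |u i|) (fun i => abs_nonneg _)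
    (fun i j hij => abs_add_abs_le_one_of_forall_inner_E8Root_le_one hu hij)
    (sum_abs_sub_two_mul_abs_le_two_of_forall_inner_E8Root_le_one hu)

theorem one_le_sq_last_of_notMem_E8EmbeddedIn9 {C : Set (EuclideanSpace ℝ (Fin 9))}
    (hnorm : ∀ x ∈ C, ‖x‖ ^ 2 = 2) (hip : C.Pairwise fun x y => ⟪x, y⟫ ≤ 1)
    (hE8 : E8EmbeddedIn9 ⊆ C) {x : EuclideanSpace ℝ (Fin 9)} (hx : x ∈ C)
    (hxE : x ∉ E8EmbeddedIn9) : 1 ≤ x 8 ^ 2 := by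
  have hroot : ∀ r ∈ E8RootSystem, ⟪dropLast x, r⟫ ≤ 1 := fun r hr => by
    have hrE : snocZero r ∈ E8EmbeddedIn9 := E8EmbeddedIn9_eq_image ▸ Set.mem_image_of_mem _ hr
    have : ⟪x, snocZero r⟫ ≤ 1 := hip hx (hE8 hrE) fun h => hxE (h ▸ hrE)
    rwa [inner_eq_inner_dropLast_add, snocZero_last, mul_zero, add_zero, dropLast_snocZero]
      at this
  have hproj := norm_sq_le_one_of_forall_inner_E8Root_le_one hroot
  have hx2 := hnorm x hx
  rw [norm_sq_eq_norm_dropLast_sq_add] at hx2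
  change 1 ≤ x (Fin.last 8) ^ 2
  linarith

theorem statement8 (C : Set (EuclideanSpace ℝ (Fin 9)))
    (hnorm : ∀ x ∈ C, ‖x‖ ^ 2 = 2)
    (hip : ∀ x ∈ C, ∀ y ∈ C, x ≠ y → ⟪x, y⟫ ≤ 1)
    (hE8 : E8EmbeddedIn9 ⊆ C) :
    C.Finite ∧ C.ncard ≤ 272 := by
  set e : EuclideanSpace ℝ (Fin 9) := EuclideanSpace.single 8 1
  have he : ‖e‖ = 1 := by simp [e]
  have hdim : finrank ℝ (EuclideanSpace ℝ (Fin 9)) = 9 := finrank_euclideanSpace_fin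
  obtain ⟨hfin₀, hcard₀⟩ := E8EmbeddedIn9_finite_and_ncard_le
  obtain ⟨hfin₁, hcard₁⟩ := cap_finite_and_ncard_le (by omega) hnorm hip he
  obtain ⟨hfin₂, hcard₂⟩ := cap_finite_and_ncard_le (e := -e) (by omega) hnorm hip
    (by rwa [norm_neg])
  have hcover : C ⊆ E8EmbeddedIn9 ∪ ({x ∈ C | 1 ≤ ⟪e, x⟫} ∪ {x ∈ C | 1 ≤ ⟪-e, x⟫}) := by
    intro x hx
    by_cases hxE : x ∈ E8EmbeddedIn9
    · exact Or.inl hxE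
    have h := one_le_sq_last_of_notMem_E8EmbeddedIn9 hnorm hip hE8 hx hxE
    rw [one_le_sq_iff_one_le_abs, le_abs'] at h
    simp only [e, inner_neg_left, EuclideanSpace.inner_single_left, map_one, one_mul]
    rcases h with h | h
    · exact Or.inr (Or.inr ⟨hx, by linarith⟩)
    · exact Or.inr (Or.inl ⟨hx, h⟩)
  have hfin := hfin₀.union (hfin₁.union hfin₂)
  refine ⟨hfin.subset hcover, (Set.ncard_le_ncard hcover hfin).trans ?_⟩
  have := Set.ncard_union_le E8EmbeddedIn9 ({x ∈ C | 1 ≤ ⟪e, x⟫} ∪ {x ∈ C | 1 ≤ ⟪-e, x⟫})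
  have := Set.ncard_union_le {x ∈ C | 1 ≤ ⟪e, x⟫} {x ∈ C | 1 ≤ ⟪-e, x⟫}
  rw [hdim] at hcard₁ hcard₂
  omega
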